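/- Let g ≥ 1, ρ, v ∈ ℝ^g, τ ∈ ℝ, K ∈ ℝ, n ∈ ℤ, m ∈ ℝ^g, and define A : ℝ^g × ℝ → ℝ^g × ℝ by A(y,z) = (y + ρ, z + ⟨v,y⟩ + τ) and the character e_{m,n}(y,z) = exp(2πı(⟨m,y⟩ + nKz)). Then for every natural number j and all (y,z) ∈ ℝ^g × ℝ, e_{m,n}(A^j(y,z)) = exp(2πı( j(⟨m,ρ⟩ + nKτ) + nK·(j(j−1)/2)·⟨v,ρ⟩ )) · e_{m + jnKv, n}(y,z). -/

import Mathlib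

/-! Iterating `A` gives `A^j(y,z) = (y + jρ, z + j⟨v,y⟩ + jτ + (j(j-1)/2)⟨v,ρ⟩)`, the quadratic
term being `∑_{k<j} k ⟨v,ρ⟩`. Substituting this into the exponent of `e_{m,n}` and regrouping
the terms linear in `y` into `⟨m + jnKv, y⟩` gives the identity. -/

section SkewShift

variable {ι : Type*} [Fintype ι]

def skewShift (ρ v : ι → ℝ) (τ : ℝ) (p : (ι → ℝ) × ℝ) : (ι → ℝ) × ℝ :=
  (p.1 + ρ, p.2 + v ⬝ᵥ p.1 + τ)

theorem skewShift_iterate (ρ v : ι → ℝ) (τ : ℝ) (j : ℕ) (y : ι → ℝ) (z : ℝ) :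
    (skewShift ρ v τ)^[j] (y, z) =
      (y + (j : ℝ) • ρ, z + j * (v ⬝ᵥ y) + j * τ + (j * (j - 1) / 2) * (v ⬝ᵥ ρ)) := by
  induction j with
  | zero => simp
  | succ j ih =>
    rw [Function.iterate_succ_apply', ih]
    simp only [skewShift, dotProduct_add, dotProduct_smul, smul_eq_mul, Prod.mk.injEq]
    push_cast
    constructor
    · module
    · ring

end SkewShift

theorem stmt_11_general (g : ℕ) (ρ v m : Fin g → ℝ) (τ K : ℝ) (n : ℤ)
    (A : (Fin g → ℝ) × ℝ → (Fin g → ℝ) × ℝ)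
    (hA : ∀ y : Fin g → ℝ, ∀ z : ℝ, A (y, z) = (y + ρ, z + (∑ i, v i * y i) + τ))
    (e : (Fin g → ℝ) → ℤ → (Fin g → ℝ) → ℝ → ℂ)
    (he : ∀ m' : Fin g → ℝ, ∀ n' : ℤ, ∀ y : Fin g → ℝ, ∀ z : ℝ,
      e m' n' y z = Complex.exp
        (((2 * Real.pi * ((∑ i, m' i * y i) + (n' : ℝ) * K * z) : ℝ) : ℂ) * Complex.I)) :
    ∀ j : ℕ, ∀ y : Fin g → ℝ, ∀ z : ℝ,
      e m n (A^[j] (y, z)).1 (A^[j] (y, z)).2 =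
        Complex.exp
          (((2 * Real.pi *
            ((j : ℝ) * ((∑ i, m i * ρ i) + (n : ℝ) * K * τ) +
              (n : ℝ) * K * ((j : ℝ) * ((j : ℝ) - 1) / 2) * (∑ i, v i * ρ i)) : ℝ) : ℂ)
            * Complex.I) *
          e (m + ((j : ℝ) * (n : ℝ) * K) • v) n y z := by
  have sum_eq_dotProduct (a b : Fin g → ℝ) : ∑ i, a i * b i = a ⬝ᵥ b := rfl
  have hA_eq : A = skewShift ρ v τ := funext fun ⟨y, z⟩ => hA y z
  intro j y z
  simp only [hA_eq, skewShift_iterate, he, ← Complex.exp_add, ← add_mul, ← Complex.ofReal_add,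
    sum_eq_dotProduct, dotProduct_add, add_dotProduct, dotProduct_smul, smul_dotProduct,
    smul_eq_mul]
  congr 3
  ring

/-- Transformation rule for characters under iterates of the skew-shift (core identity of
Lemma 5.3): with `e_{m,n}(y,z) = exp(2πı(⟨m,y⟩ + nKz))` and
`A(y,z) = (y + ρ, z + ⟨v,y⟩ + τ)`, one has
`e_{m,n} ∘ A^j = exp(2πı(j(⟨m,ρ⟩ + nKτ) + nK (j(j−1)/2) ⟨v,ρ⟩)) · e_{m + jnKv, n}`. -/
theorem stmt_11 (g : ℕ) (hg : 1 ≤ g) (ρ v m : Fin g → ℝ) (τ K : ℝ) (n : ℤ)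
    (A : (Fin g → ℝ) × ℝ → (Fin g → ℝ) × ℝ)
    (hA : ∀ y : Fin g → ℝ, ∀ z : ℝ, A (y, z) = (y + ρ, z + (∑ i, v i * y i) + τ))
    (e : (Fin g → ℝ) → ℤ → (Fin g → ℝ) → ℝ → ℂ)
    (he : ∀ m' : Fin g → ℝ, ∀ n' : ℤ, ∀ y : Fin g → ℝ, ∀ z : ℝ,
      e m' n' y z = Complex.exp
        (((2 * Real.pi * ((∑ i, m' i * y i) + (n' : ℝ) * K * z) : ℝ) : ℂ) * Complex.I)) :
    ∀ j : ℕ, ∀ y : Fin g → ℝ, ∀ z : ℝ,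
      e m n (A^[j] (y, z)).1 (A^[j] (y, z)).2 =
        Complex.exp
          (((2 * Real.pi *
            ((j : ℝ) * ((∑ i, m i * ρ i) + (n : ℝ) * K * τ) +
              (n : ℝ) * K * ((j : ℝ) * ((j : ℝ) - 1) / 2) * (∑ i, v i * ρ i)) : ℝ) : ℂ)
            * Complex.I) *
          e (m + ((j : ℝ) * (n : ℝ) * K) • v) n y z :=
  stmt_11_general g ρ v m τ K n A hA e he
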